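/- Let a ∈ ℝ_{≥0}^n with a_1 ≥ a_2 ≥ ... ≥ a_n ≥ 0, and for s ∈ ℝ define the halfspace f_s(x) = 1{a·x > s} on {-1,1}^n. Then for any s, t ∈ ℝ with |s| ≤ t, we have 5·I_1(f_s) ≥ I_1(f_t). -/

import Mathlib

open Finset

noncomputable section
open scoped Classical

/-- The ±1 value associated to a Boolean bit. -/
def sgn1 (b : Bool) : ℝ := if b then 1 else -1

/-- Probability of an event under the uniform measure on `{-1,1}^n`. -/
def cubePr (n : ℕ) (P : (Fin n → Bool) → Prop) : ℝ :=
  ((univ.filter P).card : ℝ) / 2 ^ n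

/-- Expectation of a function under the uniform measure on `{-1,1}^n`. -/
def cubeE (n : ℕ) (f : (Fin n → Bool) → ℝ) : ℝ := (∑ x, f x) / 2 ^ n

/-- The linear form `a · x = ∑ aᵢ xᵢ` on `{-1,1}^n`. -/
def lin (n : ℕ) (a : Fin n → ℝ) (x : Fin n → Bool) : ℝ := ∑ i, a i * sgn1 (x i)

/-- The halfspace `1{a · x > t}` as a 0/1-valued function. -/
def halfspace (n : ℕ) (a : Fin n → ℝ) (t : ℝ) (x : Fin n → Bool) : ℝ :=
  if t < lin n a x then 1 else 0

/-- The influence of coordinate `i` on `f`: the probability that flipping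
coordinate `i` changes the value of `f`. -/
def infl (n : ℕ) (i : Fin n) (f : (Fin n → Bool) → ℝ) : ℝ :=
  cubePr n (fun x => f x ≠ f (Function.update x i (!x i)))

/-- The degree-1 Fourier coefficient `f̂({i}) = E[f(x)·xᵢ]`. -/
def fCoeff (n : ℕ) (f : (Fin n → Bool) → ℝ) (i : Fin n) : ℝ :=
  cubeE n (fun x => f x * sgn1 (x i))

/-- The degree-1 Fourier weight `W¹(f) = ∑ᵢ f̂({i})²`. -/
def W1 (n : ℕ) (f : (Fin n → Bool) → ℝ) : ℝ := ∑ i, (fCoeff n f i) ^ 2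

/-!
Flipping `x₁` changes `f_r(x)` exactly when `Z = ∑_{i ≥ 2} aᵢxᵢ` lies in `(r - a₁, r + a₁]`, so
the claim compares the masses of two windows of length `2a₁` under the law of `Z`, whose weights
all lie in `[0, a₁]`.

For such a `Z` we show, by induction on the number of weights, that a window `(x, y]` of length
at most `2A` that lies to the right of the left endpoints of a window `J` of length `2A` and of
`-J` has at most twice the mass of `J`. Conditioning on the sign of the first weight `b` shifts
every window by `±b`. Either one of the two ways of pairing the shifted copies of `(x, y]` with
those of `J` satisfies the hypothesis, or, after replacing `J` by `-J` (same mass, as `Z` is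
symmetric), `(x - b, y - b]` is covered by `J - b ∪ J + b` while `(x + b, y + b]` is at most twice
the lighter of the two; since `1 + 2 · ½ ≤ 2` the induction closes.
-/

open Set

lemma card_filter_fin_succ {m : ℕ} (Q : (Fin (m + 1) → Bool) → Prop) [DecidablePred Q] :
    #{x | Q x} = #{y : Fin m → Bool | Q (Fin.cons true y)}
      + #{y : Fin m → Bool | Q (Fin.cons false y)} := by
  simp only [card_filter]
  rw [← (Fin.consEquiv fun _ => Bool).sum_comp, Fintype.sum_prod_type, Fintype.sum_bool]
  rfl

lemma sgn1_not (b : Bool) : sgn1 (!b) = -sgn1 b := by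
  cases b <;> simp [sgn1]

lemma lin_succ {m : ℕ} (a : Fin (m + 1) → ℝ) (x : Fin (m + 1) → Bool) :
    lin (m + 1) a x = a 0 * sgn1 (x 0) + lin m (Fin.tail a) (Fin.tail x) := by
  simp only [lin, Fin.sum_univ_succ, Fin.tail]

lemma lin_not {m : ℕ} (a : Fin m → ℝ) (x : Fin m → Bool) :
    lin m a (fun i => !x i) = -lin m a x := by
  simp only [lin, sgn1_not, mul_neg, sum_neg_distrib]

def signCount (m : ℕ) (w : Fin m → ℝ) (S : Set ℝ) : ℕ := #{σ | lin m w σ ∈ S}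

lemma signCount_zero (w : Fin 0 → ℝ) (S : Set ℝ) :
    signCount 0 w S = if (0 : ℝ) ∈ S then 1 else 0 := by
  by_cases h : (0 : ℝ) ∈ S <;> simp [signCount, lin, h]

section signCount

variable {m : ℕ} (w : Fin m → ℝ)

lemma signCount_cons (b : ℝ) (S : Set ℝ) :
    signCount (m + 1) (Fin.cons b w) S
      = signCount m w ((b + ·) ⁻¹' S) + signCount m w ((-b + ·) ⁻¹' S) := by
  simp [signCount, card_filter_fin_succ, lin_succ, sgn1]

lemma signCount_le_add_of_subset_union {S T U : Set ℝ} (h : S ⊆ T ∪ U) :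
    signCount m w S ≤ signCount m w T + signCount m w U := by
  refine (card_le_card fun σ hσ => ?_).trans (card_union_le _ _)
  simp only [Finset.mem_filter, Finset.mem_univ, true_and, Finset.mem_union] at hσ ⊢
  exact h hσ

lemma signCount_neg (S : Set ℝ) : signCount m w (-S) = signCount m w S :=
  card_equiv (Equiv.piCongrRight fun _ => Equiv.boolNot) fun σ => by
    simp only [Finset.mem_filter, Finset.mem_univ, true_and, Set.mem_neg]
    rw [← lin_not]
    rfl

end signCount

/-- Both orientations are allowed because reflection `J ↦ -J` swaps them. -/
def IsWindow (A u : ℝ) (J : Set ℝ) : Prop := J = Ioc u (u + 2 * A) ∨ J = Ico u (u + 2 * A)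

namespace IsWindow

variable {A u : ℝ} {J : Set ℝ}

lemma neg (h : IsWindow A u J) : IsWindow A (-(u + 2 * A)) (-J) := by
  rcases h with rfl | rfl
  · right; rw [neg_Ioc]; ring_nf
  · left; rw [neg_Ico]; ring_nf

lemma preimage_const_add (h : IsWindow A u J) (c : ℝ) :
    IsWindow A (u - c) ((c + ·) ⁻¹' J) := by
  rcases h with rfl | rfl
  · left; rw [preimage_const_add_Ioc]; ring_nf
  · right; rw [preimage_const_add_Ico]; ring_nf

lemma Ioo_subset (h : IsWindow A u J) : Ioo u (u + 2 * A) ⊆ J := by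
  rcases h with rfl | rfl
  · exact Ioo_subset_Ioc_self
  · exact Ioo_subset_Ico_self

lemma Ioo_subset_union {b : ℝ} (h : IsWindow A u J) (hb : b ≤ A) :
    Ioo (u - b) (u + 2 * A + b) ⊆ (b + ·) ⁻¹' J ∪ (-b + ·) ⁻¹' J := by
  rintro z ⟨hz₁, hz₂⟩
  rcases h with rfl | rfl
  · by_cases hz : b + z ≤ u + 2 * A
    · exact Or.inl ⟨by linarith, hz⟩
    · exact Or.inr ⟨by linarith, by linarith⟩
  · by_cases hz : b + z < u + 2 * A
    · exact Or.inl ⟨by linarith, hz⟩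
    · exact Or.inr ⟨by linarith, by linarith⟩

end IsWindow

def WindowBound (A : ℝ) {m : ℕ} (w : Fin m → ℝ) : Prop :=
  ∀ ⦃x y u : ℝ⦄ ⦃J : Set ℝ⦄, IsWindow A u J → y ≤ x + 2 * A → u ≤ x → -(u + 2 * A) ≤ x →
    signCount m w (Ioc x y) ≤ 2 * signCount m w J

lemma windowBound_zero (A : ℝ) (w : Fin 0 → ℝ) : WindowBound A w := by
  intro x y u J hJ hyx hux hvx
  rw [signCount_zero, signCount_zero]
  split_ifs with hI hJ0 <;> try omega
  exact absurd (hJ.Ioo_subset ⟨by linarith [hI.1], by linarith [hI.1]⟩) hJ0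

section cons

variable {A b : ℝ} {m : ℕ} {w : Fin m → ℝ}

lemma signCount_cons_Ioc (x y : ℝ) :
    signCount (m + 1) (Fin.cons b w) (Ioc x y)
      = signCount m w (Ioc (x - b) (y - b)) + signCount m w (Ioc (x + b) (y + b)) := by
  rw [signCount_cons, preimage_const_add_Ioc, preimage_const_add_Ioc, sub_neg_eq_add,
    sub_neg_eq_add]

lemma WindowBound.cons_of_centered (hw : WindowBound A w) (hbA : b ≤ A)
    {x y u : ℝ} {J : Set ℝ} (hJ : IsWindow A u J) (hyx : y ≤ x + 2 * A) (hux : u ≤ x)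
    (hvx : -(u + 2 * A) ≤ x) (hcenter : 0 ≤ u + A) (hx : x < -(u + 2 * A) + 2 * b) :
    signCount (m + 1) (Fin.cons b w) (Ioc x y) ≤ 2 * signCount (m + 1) (Fin.cons b w) J := by
  have hJl := hJ.preimage_const_add b
  have hJr := hJ.preimage_const_add (-b)
  rw [signCount_cons_Ioc, signCount_cons]
  have hcover : signCount m w (Ioc (x - b) (y - b))
      ≤ signCount m w ((b + ·) ⁻¹' J) + signCount m w ((-b + ·) ⁻¹' J) := by
    refine signCount_le_add_of_subset_union w fun z hz => hJ.Ioo_subset_union hbA ?_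
    exact ⟨by linarith [hz.1], by linarith [hz.2]⟩
  have hl := hw hJl (x := x + b) (y := y + b) (by linarith) (by linarith) (by linarith)
  have hr := hw hJr (x := x + b) (y := y + b) (by linarith) (by linarith) (by linarith)
  omega

lemma WindowBound.cons (hw : WindowBound A w) (hb : 0 ≤ b) (hbA : b ≤ A) :
    WindowBound A (Fin.cons b w : Fin (m + 1) → ℝ) := by
  intro x y u J hJ hyx hux hvx
  have hJl := hJ.preimage_const_add b
  have hJr := hJ.preimage_const_add (-b)
  by_cases hpar : -(u + 2 * A) + 2 * b ≤ x
  · rw [signCount_cons_Ioc, signCount_cons]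
    have hl := hw hJl (x := x - b) (y := y - b) (by linarith) (by linarith) (by linarith)
    have hr := hw hJr (x := x + b) (y := y + b) (by linarith) (by linarith) (by linarith)
    omega
  by_cases hcross : u + 2 * b ≤ x
  · rw [signCount_cons_Ioc, signCount_cons]
    have hl := hw hJr (x := x - b) (y := y - b) (by linarith) (by linarith) (by linarith)
    have hr := hw hJl (x := x + b) (y := y + b) (by linarith) (by linarith) (by linarith)
    omega
  rcases le_or_gt 0 (u + A) with hcenter | hcenter
  · exact hw.cons_of_centered hbA hJ hyx hux hvx hcenter (by linarith)
  · rw [← signCount_neg _ J]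
    exact hw.cons_of_centered hbA hJ.neg hyx hvx (by linarith) (by linarith) (by linarith)

end cons

lemma windowBound_of_forall_mem_Icc {A : ℝ} :
    ∀ {m : ℕ} {w : Fin m → ℝ}, (∀ i, w i ∈ Icc 0 A) → WindowBound A w
  | 0, w, _ => windowBound_zero A w
  | m + 1, w, hw => by
    rw [← Fin.cons_self_tail w]
    exact (windowBound_of_forall_mem_Icc fun i => hw i.succ).cons (hw 0).1 (hw 0).2

lemma ite_lt_add_ne_ite_lt_neg_add_iff {A : ℝ} (hA : 0 ≤ A) (r z : ℝ) :
    ((if r < A + z then (1 : ℝ) else 0) ≠ if r < -A + z then 1 else 0)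
      ↔ z ∈ Ioc (r - A) (r + A) := by
  rw [Set.mem_Ioc]
  split_ifs with h₁ h₂ h₂ <;> norm_num <;> first | (constructor <;> linarith) | (intro; linarith)

lemma halfspace_ne_flip_iff {m : ℕ} {a : Fin (m + 1) → ℝ} (ha : 0 ≤ a 0) (r : ℝ)
    (x : Fin (m + 1) → Bool) :
    halfspace (m + 1) a r x ≠ halfspace (m + 1) a r (Function.update x 0 (!x 0))
      ↔ lin m (Fin.tail a) (Fin.tail x) ∈ Ioc (r - a 0) (r + a 0) := by
  rw [halfspace, halfspace, lin_succ, lin_succ, Fin.tail_update_zero, Function.update_self,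
    sgn1_not, ← ite_lt_add_ne_ite_lt_neg_add_iff ha]
  cases x 0
  · simp only [sgn1, Bool.false_eq_true, if_false, mul_neg, mul_one, neg_neg]
    exact ne_comm
  · simp only [sgn1, if_true, mul_neg, mul_one]

lemma infl_zero_halfspace {m : ℕ} {a : Fin (m + 1) → ℝ} (ha : 0 ≤ a 0) (r : ℝ) :
    infl (m + 1) 0 (halfspace (m + 1) a r)
      = signCount m (Fin.tail a) (Ioc (r - a 0) (r + a 0)) / 2 ^ m := by
  simp_rw [infl, cubePr, halfspace_ne_flip_iff ha r, card_filter_fin_succ, Fin.tail_cons,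
    ← two_mul, signCount]
  push_cast
  rw [pow_succ]
  field_simp
  congr

/-- **Decay of the first influence.** For `a₁ ≥ a₂ ≥ ... ≥ aₙ ≥ 0` and the
halfspaces `f_s = 1{a·x > s}`: for any `|s| ≤ t`, `5·I₁(f_s) ≥ I₁(f_t)`. -/
theorem first_influence_decay (n : ℕ) (hn : 0 < n) (a : Fin n → ℝ)
    (ha0 : ∀ i, 0 ≤ a i) (hmono : ∀ i j : Fin n, i ≤ j → a j ≤ a i)
    (s t : ℝ) (hst : |s| ≤ t) :
    infl n ⟨0, hn⟩ (halfspace n a t) ≤ 5 * infl n ⟨0, hn⟩ (halfspace n a s) := by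
  obtain ⟨m, rfl⟩ : ∃ m, n = m + 1 := ⟨n - 1, by omega⟩
  have hw : ∀ i, Fin.tail a i ∈ Icc 0 (a 0) :=
    fun i => ⟨ha0 _, hmono 0 _ (Fin.zero_le _)⟩
  have hJ : IsWindow (a 0) (s - a 0) (Ioc (s - a 0) (s + a 0)) := Or.inl (by ring_nf)
  have hcount := windowBound_of_forall_mem_Icc hw hJ (x := t - a 0) (y := t + a 0) (by linarith)
    (by linarith [le_abs_self s]) (by linarith [neg_abs_le s])
  change infl (m + 1) 0 _ ≤ 5 * infl (m + 1) 0 _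
  rw [infl_zero_halfspace (ha0 0), infl_zero_halfspace (ha0 0), mul_div_assoc']
  gcongr
  exact_mod_cast hcount.trans (by omega)
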